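/- arXiv:1308.4308 — 2 statements merged into one kernel-verified Lean document; each statement's English description precedes it below -/
import Mathlib

section
/- Let G be a finite simple graph on the vertex set {1,…,n}. For every edge {i,j} of G with i<j, the monomials x_{ii}x_{jj} and x_{ij}x_{ji} are indispensable monomials of P_G: every set of binomials that generates the ideal P_G contains a binomial one of whose two monomials is x_{ii}x_{jj}, and also contains a binomial one of whose two monomials is x_{ij}x_{ji}. -/
open MvPolynomial

/-- The set of variables of `S`: one variable `x_{ii}` for each vertex `i` of `G` and two
variables `x_{ij}`, `x_{ji}` for each edge `{i,j}` of `G`. -/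
abbrev VarSet (n : ℕ) (G : SimpleGraph (Fin n)) : Type :=
  {p : Fin n × Fin n // p.1 = p.2 ∨ G.Adj p.1 p.2}

/-- The diagonal 2-minor `f_{ij} = x_{ii} x_{jj} - x_{ij} x_{ji}`. -/
noncomputable def fij (K : Type) [Field K] {n : ℕ} {G : SimpleGraph (Fin n)}
    {i j : Fin n} (h : G.Adj i j) : MvPolynomial (VarSet n G) K :=
  X ⟨(i, i), Or.inl rfl⟩ * X ⟨(j, j), Or.inl rfl⟩ -
    X ⟨(i, j), Or.inr h⟩ * X ⟨(j, i), Or.inr h.symm⟩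

/-- The ideal `P_G` generated by the diagonal 2-minors `f_{ij}` for edges `{i,j}`, `i < j`. -/
noncomputable def PG (K : Type) [Field K] (n : ℕ) (G : SimpleGraph (Fin n)) :
    Ideal (MvPolynomial (VarSet n G) K) :=
  Ideal.span {f | ∃ i j : Fin n, ∃ h : G.Adj i j, i < j ∧ f = fij K h}

/-- `f` is a binomial: a difference `x^u - x^v` of two distinct monomials. -/
def IsBinomial (K : Type) [Field K] {σ : Type} (f : MvPolynomial σ K) : Prop :=
  ∃ u v : σ →₀ ℕ, u ≠ v ∧ f = monomial u 1 - monomial v 1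

/-- `M` is one of the two monomials of the binomial `f`. -/
def IsMonomialOf (K : Type) [Field K] {σ : Type} (M f : MvPolynomial σ K) : Prop :=
  ∃ u v : σ →₀ ℕ, u ≠ v ∧ f = monomial u 1 - monomial v 1 ∧
    (M = monomial u 1 ∨ M = monomial v 1)

/-!
`P_G` is generated by differences of quadratic monomials, so every monomial occurring in an
element of `P_G` is divisible by a quadratic one and has degree at least `2`. Writing `f_{ij}`
as a combination of the binomials of a generating set, some binomial has a monomial dividing
`x_{ii}x_{jj}` (resp. `x_{ij}x_{ji}`); as that binomial lies in `P_G`, the degree bound forces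
the monomial to be `x_{ii}x_{jj}` (resp. `x_{ij}x_{ji}`) itself.
-/

open Finsupp

theorem Finsupp.eq_of_le_of_degree_le {σ : Type*} {s t : σ →₀ ℕ} (hst : s ≤ t)
    (hdeg : degree t ≤ degree s) : s = t := by
  obtain ⟨r, rfl⟩ := le_iff_exists_add.mp hst
  rw [map_add] at hdeg
  rw [(degree_eq_zero_iff r).mp (by omega), add_zero]

namespace MvPolynomial

variable {σ R : Type*}

theorem exists_mem_support_le_of_mem_ideal_span [CommSemiring R] {F : Set (MvPolynomial σ R)}
    {p : MvPolynomial σ R} (hp : p ∈ Ideal.span F) {μ : σ →₀ ℕ} (hμ : μ ∈ p.support) :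
    ∃ f ∈ F, ∃ v ∈ f.support, v ≤ μ := by
  by_contra! h
  have hF : Ideal.span F ≤ Ideal.span ((fun s => monomial s (1 : R)) '' {v | ¬v ≤ μ}) :=
    Ideal.span_le.mpr fun f hf =>
      mem_ideal_span_monomial_image.mpr fun v hv => ⟨v, h f hf v hv, le_rfl⟩
  obtain ⟨s, hs, hsμ⟩ := mem_ideal_span_monomial_image.mp (hF hp) μ hμ
  exact hs hsμ

theorem le_degree_of_mem_ideal_span_monomial [CommSemiring R] {d : ℕ} {p : MvPolynomial σ R}
    (hp : p ∈ Ideal.span ((fun s => monomial s (1 : R)) '' {s | degree s = d}))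
    {v : σ →₀ ℕ} (hv : v ∈ p.support) : d ≤ degree v := by
  obtain ⟨s, rfl, hsv⟩ := mem_ideal_span_monomial_image.mp hp v hv
  exact degree_mono hsv

theorem mem_support_monomial_sub_monomial [CommRing R] [Nontrivial R] {u v w : σ →₀ ℕ}
    (huv : u ≠ v) : w ∈ (monomial u (1 : R) - monomial v 1).support ↔ w = u ∨ w = v := by
  classical
  rw [mem_support_iff, coeff_sub, coeff_monomial, coeff_monomial]
  split_ifs <;> simp_all [eq_comm]

theorem X_mul_X_eq_monomial [CommSemiring R] (a b : σ) :
    (X a * X b : MvPolynomial σ R) = monomial (single a 1 + single b 1) 1 := by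
  rw [X, X, monomial_mul, one_mul]

end MvPolynomial

theorem IsBinomial.isMonomialOf_of_mem_support {K : Type} [Field K] {σ : Type}
    {f : MvPolynomial σ K} (hf : IsBinomial K f) {w : σ →₀ ℕ} (hw : w ∈ f.support) :
    IsMonomialOf K (monomial w 1) f := by
  obtain ⟨u, v, huv, rfl⟩ := hf
  exact ⟨u, v, huv, rfl, ((mem_support_monomial_sub_monomial huv).mp hw).imp
    (congrArg (monomial · 1)) (congrArg (monomial · 1))⟩

theorem exists_isMonomialOf_of_degree_eq {K : Type} [Field K] {σ : Type}
    {F : Set (MvPolynomial σ K)} (hbin : ∀ f ∈ F, IsBinomial K f) {d : ℕ}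
    (hF : ∀ f ∈ F, f ∈ Ideal.span ((fun s => monomial s (1 : K)) '' {s | degree s = d}))
    {p : MvPolynomial σ K} (hp : p ∈ Ideal.span F) {μ : σ →₀ ℕ} (hμ : μ ∈ p.support)
    (hdeg : degree μ = d) : ∃ f ∈ F, IsMonomialOf K (monomial μ 1) f := by
  obtain ⟨f, hfF, v, hv, hvμ⟩ := exists_mem_support_le_of_mem_ideal_span hp hμ
  obtain rfl : v = μ :=
    eq_of_le_of_degree_le hvμ (hdeg ▸ le_degree_of_mem_ideal_span_monomial (hF f hfF) hv)
  exact ⟨f, hfF, (hbin f hfF).isMonomialOf_of_mem_support hv⟩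

section Graph

variable {K : Type} [Field K] {n : ℕ} {G : SimpleGraph (Fin n)}

theorem fij_eq_monomial_sub_monomial {i j : Fin n} (h : G.Adj i j) :
    fij K h = monomial (single ⟨(i, i), Or.inl rfl⟩ 1 + single ⟨(j, j), Or.inl rfl⟩ 1) 1 -
      monomial (single ⟨(i, j), Or.inr h⟩ 1 + single ⟨(j, i), Or.inr h.symm⟩ 1) 1 := by
  rw [fij, X_mul_X_eq_monomial, X_mul_X_eq_monomial]

theorem diagonal_exponent_ne_offDiagonal_exponent {i j : Fin n} (h : G.Adj i j) :
    (single ⟨(i, i), Or.inl rfl⟩ 1 + single ⟨(j, j), Or.inl rfl⟩ 1 : VarSet n G →₀ ℕ) ≠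
      single ⟨(i, j), Or.inr h⟩ 1 + single ⟨(j, i), Or.inr h.symm⟩ 1 := by
  intro heq
  have := DFunLike.congr_fun heq ⟨(i, i), Or.inl rfl⟩
  simp [h.ne] at this

theorem PG_le_span_monomial_degree_two :
    PG K n G ≤ Ideal.span ((fun s => monomial s (1 : K)) '' {s | degree s = 2}) := by
  rw [PG, Ideal.span_le]
  rintro _ ⟨i, j, h, -, rfl⟩
  rw [fij_eq_monomial_sub_monomial]
  exact sub_mem (Ideal.subset_span ⟨_, by simp, rfl⟩) (Ideal.subset_span ⟨_, by simp, rfl⟩)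

end Graph

/-- For every edge `{i,j}` of `G` with `i < j`, the monomials `x_{ii} x_{jj}`
and `x_{ij} x_{ji}` are indispensable monomials of `P_G`: every set of binomials generating
`P_G` contains a binomial one of whose two monomials is `x_{ii} x_{jj}`, and also contains a
binomial one of whose two monomials is `x_{ij} x_{ji}`. -/
theorem indispensable_monomials (K : Type) [Field K] (n : ℕ) (G : SimpleGraph (Fin n))
    (F : Set (MvPolynomial (VarSet n G) K)) (hbin : ∀ f ∈ F, IsBinomial K f)
    (hgen : Ideal.span F = PG K n G)
    (i j : Fin n) (hij : i < j) (hadj : G.Adj i j) :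
    (∃ f ∈ F, IsMonomialOf K (X ⟨(i, i), Or.inl rfl⟩ * X ⟨(j, j), Or.inl rfl⟩) f) ∧
    (∃ f ∈ F, IsMonomialOf K (X ⟨(i, j), Or.inr hadj⟩ * X ⟨(j, i), Or.inr hadj.symm⟩) f) := by
  have hF : ∀ f ∈ F, f ∈ Ideal.span ((fun s => monomial s (1 : K)) '' {s | degree s = 2}) :=
    fun f hf => PG_le_span_monomial_degree_two (hgen ▸ Ideal.subset_span hf)
  have hfij : fij K hadj ∈ Ideal.span F := hgen ▸ Ideal.subset_span ⟨i, j, hadj, hij, rfl⟩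
  rw [X_mul_X_eq_monomial, X_mul_X_eq_monomial]
  refine ⟨exists_isMonomialOf_of_degree_eq hbin hF hfij ?_ (by simp),
    exists_isMonomialOf_of_degree_eq hbin hF hfij ?_ (by simp)⟩ <;>
  rw [fij_eq_monomial_sub_monomial,
    mem_support_monomial_sub_monomial (diagonal_exponent_ne_offDiagonal_exponent hadj)] <;>
  simp
end

section
/- Let G be a finite simple graph on the vertex set {1,…,n} with m edges. Then the matrix N_G is totally unimodular (every square submatrix has determinant 0, 1, or −1) if and only if G is bipartite. -/
/-!
If `G` has an odd cycle `v₀ v₁ … v_{k-1}`, the rows `vᵢ` of `N_G` and its columns `x_{ij}` of the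
cycle edges form the matrix `(1 + P)ᵀ`, `P` the cyclic permutation matrix. Its determinant is
even (every column of `1 + P` contains two ones) and nonzero (`(1 + P) (1 - P + ⋯ + P^(k-1)) = 2`
as `k` is odd), so `N_G` is not totally unimodular.

Conversely, up to the order of its columns `N_G` is `[[B, 1, 0], [-1, 0, 1]]`, with `B` the
vertex-edge incidence matrix of `G`. Adjoining unit columns and unit rows preserves total
unimodularity, and the incidence matrix of a bipartite graph is totally unimodular: in a square
submatrix either some column has at most one nonzero entry, and one expands along it, or every
column has one `1` in each colour class, and the rows signed by their colour sum to zero.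
-/

open MvPolynomial

/-- The index `t` of the edge `{i,j}` in the fixed enumeration `z` of the edges of `G`. -/
noncomputable def edgeIdx {n m : ℕ} {G : SimpleGraph (Fin n)} (z : Fin m ≃ G.edgeSet)
    {i j : Fin n} (h : G.Adj i j) : Fin m :=
  z.symm ⟨s(i, j), G.mem_edgeSet.mpr h⟩

/-- The columns of `N_G`: `e_j` for a vertex `j`; for the edge `z_t = {i,j}` with `i < j`,
the column `e_i + e_j - e_{n+t}` for `x_{ij}` and the column `e_{n+t}` for `x_{ji}`. -/
noncomputable def aVec (n m : ℕ) (G : SimpleGraph (Fin n)) (z : Fin m ≃ G.edgeSet)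
    (v : VarSet n G) : (Fin n ⊕ Fin m) → ℤ :=
  if hij : v.1.1 = v.1.2 then Pi.single (Sum.inl v.1.1) 1
  else
    have hadj : G.Adj v.1.1 v.1.2 := v.2.resolve_left hij
    if v.1.1 < v.1.2 then
      Pi.single (Sum.inl v.1.1) 1 + Pi.single (Sum.inl v.1.2) 1
        - Pi.single (Sum.inr (edgeIdx z hadj)) 1
    else Pi.single (Sum.inr (edgeIdx z hadj)) 1

/-- The `(n+m) × (2m+n)` integer matrix `N_G` whose columns are the vectors of `A_G`. -/
noncomputable def NG (n m : ℕ) (G : SimpleGraph (Fin n)) (z : Fin m ≃ G.edgeSet) :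
    Matrix (Fin n ⊕ Fin m) (VarSet n G) ℤ :=
  Matrix.of fun s v => aVec n m G z v s

/-- A matrix is totally unimodular if every square submatrix (given by distinct rows and
distinct columns) has determinant `0`, `1` or `-1`. -/
def IsTU {R C : Type} (A : Matrix R C ℤ) : Prop :=
  ∀ (k : ℕ) (r : Fin k → R) (c : Fin k → C), Function.Injective r → Function.Injective c →
    (A.submatrix r c).det = 0 ∨ (A.submatrix r c).det = 1 ∨ (A.submatrix r c).det = -1

open Equiv Matrix

namespace SimpleGraph

variable {V : Type*} {G : SimpleGraph V}

/-- A closed walk of length `k`, encoded as the `k`-periodic sequence of its vertices. -/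
structure IsPeriodicWalk (G : SimpleGraph V) (f : ℕ → V) (k : ℕ) : Prop where
  periodic : Function.Periodic f k
  adj : ∀ t, G.Adj (f t) (f (t + 1))

lemma isPeriodicWalk_mod {f : ℕ → V} {a d : ℕ} (hd : 0 < d) (hf : f (a + d) = f a)
    (hadj : ∀ t < d, G.Adj (f (a + t)) (f (a + t + 1))) :
    G.IsPeriodicWalk (fun t => f (a + t % d)) d where
  periodic t := by simp
  adj t := by
    have ht := Nat.mod_lt t hd
    have hnext : f (a + (t + 1) % d) = f (a + t % d + 1) := by
      rw [← Nat.mod_add_mod]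
      rcases (Nat.succ_le_of_lt ht).lt_or_eq with hlt | heq
      · rw [Nat.mod_eq_of_lt hlt, add_assoc]
      · rw [Nat.succ_eq_add_one] at heq
        rw [heq, Nat.mod_self, add_zero, add_assoc, heq, hf]
    simpa only [hnext] using hadj _ ht

lemma exists_odd_isPeriodicWalk_injOn (h : ¬G.Colorable 2) :
    ∃ k f, Odd k ∧ G.IsPeriodicWalk f k ∧ Set.InjOn f (Set.Iio k) := by
  classical
  have hex : ∃ k, Odd k ∧ ∃ f, G.IsPeriodicWalk f k := by
    obtain ⟨u, w, hw⟩ : ∃ u, ∃ w : G.Walk u u, Odd w.length := by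
      simpa [two_colorable_iff_forall_loop_even] using h
    refine ⟨w.length, hw, _,
      isPeriodicWalk_mod (f := w.getVert) (a := 0) hw.pos (by simp) fun t ht => ?_⟩
    simpa using w.adj_getVert_succ ht
  obtain ⟨hodd, f, hf⟩ := Nat.find_spec hex
  refine ⟨_, f, hodd, hf, fun i hi j hj hij => ?_⟩
  by_contra hne
  wlog hlt : i < j generalizing i j
  · exact this j hj i hi hij.symm (Ne.symm hne) (by omega)
  -- a repeated vertex splits the shortest odd closed walk into two shorter ones, one of them odd
  have hk : j < Nat.find hex := hj
  have inner := isPeriodicWalk_mod (G := G) (a := i) (d := j - i) (by omega)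
    (by rw [Nat.add_sub_cancel' hlt.le, hij]) fun t _ => hf.adj _
  have outer := isPeriodicWalk_mod (G := G) (a := j) (d := Nat.find hex - (j - i)) (by omega)
    (by rw [show j + (Nat.find hex - (j - i)) = i + Nat.find hex by omega, hf.periodic, hij])
    fun t _ => hf.adj _
  rcases Nat.even_or_odd (j - i) with heven | hodd'
  · exact Nat.find_min hex (m := Nat.find hex - (j - i)) (by omega)
      ⟨by rw [Nat.odd_sub (by omega)]; simp [hodd, heven], _, outer⟩
  · exact Nat.find_min hex (m := j - i) (by omega) ⟨hodd', _, inner⟩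

lemma exists_odd_cycle (h : ¬G.Colorable 2) :
    ∃ k, ∃ g : Fin k → V, Odd k ∧ g.Injective ∧ ∀ i, G.Adj (g i) (g (finRotate k i)) := by
  obtain ⟨k, f, hk, hf, hinj⟩ := exists_odd_isPeriodicWalk_injOn h
  refine ⟨k, fun i => f i, hk, fun i j hij => Fin.ext (hinj i.2 j.2 hij), fun i => ?_⟩
  obtain ⟨l, rfl⟩ : ∃ l, k = l + 1 := ⟨k - 1, by have := hk.pos; omega⟩
  show G.Adj (f i) (f (finRotate (l + 1) i))
  rw [coe_finRotate]
  split_ifs with hi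
  · simpa [hi, ← hf.periodic 0] using hf.adj l
  · exact hf.adj i

end SimpleGraph

lemma finRotate_pow_self (k : ℕ) : finRotate k ^ k = 1 := by
  rcases lt_or_ge k 2 with hk | hk
  · interval_cases k <;> exact Subsingleton.elim _ _
  · have h := pow_orderOf_eq_one (finRotate k)
    rwa [(isCycle_finRotate_of_le hk).orderOf, support_finRotate_of_le hk, Finset.card_univ,
      Fintype.card_fin] at h

namespace Matrix

section PermMatrix

variable {ι : Type*} [Fintype ι] [DecidableEq ι]

lemma two_dvd_det_one_add_permMatrix [Nonempty ι] (σ : Perm ι) :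
    2 ∣ (1 + σ.permMatrix ℤ).det := by
  rw [← Nat.cast_ofNat, ← ZMod.intCast_zmod_eq_zero_iff_dvd, Int.cast_det]
  have hmap : (1 + σ.permMatrix ℤ).map (Int.cast : ℤ → ZMod 2) = 1 + σ.permMatrix (ZMod 2) := by
    rw [Matrix.map_add _ Int.cast_add, Matrix.map_one _ Int.cast_zero Int.cast_one]
    congr 1
    ext i j
    simp [PEquiv.toMatrix_apply, apply_ite]
  -- every column of `1 + P` contains exactly two ones
  rw [hmap, ← exists_vecMul_eq_zero_iff]
  refine ⟨1, one_ne_zero, ?_⟩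
  ext j
  simp only [vecMul_add, vecMul_one, vecMul_permMatrix]
  exact CharTwo.add_self_eq_zero (1 : ZMod 2)

lemma det_one_add_permMatrix_ne_zero {R : Type*} [CommRing R] [IsDomain R] [CharZero R]
    {σ : Perm ι} {k : ℕ} (hk : Odd k) (hσ : σ ^ k = 1) :
    (1 + σ.permMatrix R).det ≠ 0 := by
  set P := σ.permMatrix R
  have hP : P ^ k = 1 := by
    have : P = permMatrixHom σ⁻¹ := by simp [P]
    rw [this, ← map_pow, inv_pow, hσ, inv_one, map_one]
  have hinv : (1 + P) * ∑ i ∈ Finset.range k, (-P) ^ i = (2 : R) • 1 := by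
    rw [← sub_neg_eq_add, mul_neg_geom_sum, hk.neg_pow, hP, sub_neg_eq_add, two_smul]
  intro h
  have := congrArg det hinv
  rw [det_mul, h, zero_mul, det_smul, det_one, mul_one] at this
  exact pow_ne_zero _ two_ne_zero this.symm

lemma det_one_add_permMatrix_notMem_range_signType [Nonempty ι] {σ : Perm ι} {k : ℕ}
    (hk : Odd k) (hσ : σ ^ k = 1) :
    (1 + σ.permMatrix ℤ).det ∉ Set.range SignType.cast := by
  rintro ⟨s, hs⟩
  have h2 := two_dvd_det_one_add_permMatrix (ι := ι) σ
  have h0 := det_one_add_permMatrix_ne_zero (R := ℤ) hk hσ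
  rw [← hs] at h2 h0
  cases s <;> simp at h2 h0

end PermMatrix

variable {R : Type*} [CommRing R]

lemma det_succ_mem_range_signType_of_col_eq_single {k : ℕ}
    {M : Matrix (Fin (k + 1)) (Fin (k + 1)) R} {x i₀ : Fin (k + 1)}
    (hx : ∀ i, M i x = if i = i₀ then 1 else 0)
    (hminor : (M.submatrix i₀.succAbove x.succAbove).det ∈ Set.range SignType.cast) :
    M.det ∈ Set.range SignType.cast := by
  obtain ⟨s, hs⟩ := hminor
  refine ⟨(-1) ^ (i₀ + x : ℕ) * s, ?_⟩
  rw [det_succ_column M x, Fintype.sum_eq_single i₀ fun i hi => by simp [hx, hi]]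
  simp [hx, hs]

variable [IsDomain R]

theorem det_mem_range_signType_of_bicolored {k : ℕ} (M : Matrix (Fin k) (Fin k) R)
    (c : Fin k → Bool) (h01 : ∀ i j, M i j = 0 ∨ M i j = 1)
    (hc : ∀ j u v, M u j = 1 → M v j = 1 → c u = c v → u = v) :
    M.det ∈ Set.range SignType.cast := by
  induction k with
  | zero => exact ⟨1, by simp⟩
  | succ k ih =>
    by_cases hfull : ∀ x b, ∃ i, c i = b ∧ M i x = 1
    · refine ⟨0, (exists_vecMul_eq_zero_iff.mp ⟨fun i => if c i then 1 else -1,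
        fun h => by have := congrFun h 0; split_ifs at this <;> simp at this, ?_⟩).symm⟩
      ext x
      obtain ⟨i₁, hc₁, hi₁⟩ := hfull x true
      obtain ⟨i₂, hc₂, hi₂⟩ := hfull x false
      have hzero : ∀ i, i ≠ i₁ ∧ i ≠ i₂ → M i x = 0 := fun i hi =>
        (h01 i x).resolve_right fun h => by
          cases hci : c i
          · exact hi.2 (hc x i i₂ h hi₂ (hci.trans hc₂.symm))
          · exact hi.1 (hc x i i₁ h hi₁ (hci.trans hc₁.symm))
      rw [vecMul, dotProduct, Fintype.sum_eq_add i₁ i₂ (by rintro rfl; simp_all)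
        fun i hi => by simp [hzero i hi]]
      simp [hc₁, hc₂, hi₁, hi₂]
    · push Not at hfull
      obtain ⟨x, b, hx⟩ := hfull
      by_cases hone : ∃ i₀, M i₀ x = 1
      · obtain ⟨i₀, hi₀⟩ := hone
        refine det_succ_mem_range_signType_of_col_eq_single (x := x) (i₀ := i₀) (fun i => ?_)
          (ih _ (c ∘ i₀.succAbove) (fun _ _ => h01 _ _) fun j u v hu hv huv =>
            Fin.succAbove_right_injective (hc _ _ _ hu hv huv))
        split_ifs with hi
        · rwa [hi]
        · -- both would have the colour `!b`
          exact (h01 i x).resolve_right fun h => hi (hc x i i₀ h hi₀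
            ((Bool.eq_not_of_ne fun e => hx i e h).trans
              (Bool.eq_not_of_ne fun e => hx i₀ e hi₀).symm))
      · push Not at hone
        exact ⟨0, (det_eq_zero_of_column_eq_zero x fun i =>
          (h01 i x).resolve_right (hone i)).symm⟩

theorem isTotallyUnimodular_of_bicolored {m n : Type*} (A : Matrix m n R) (c : m → Bool)
    (h01 : ∀ i j, A i j = 0 ∨ A i j = 1)
    (hc : ∀ j u v, A u j = 1 → A v j = 1 → c u = c v → u = v) :
    A.IsTotallyUnimodular := fun _ f g hf _ =>
  det_mem_range_signType_of_bicolored (A.submatrix f g) (c ∘ f) (fun _ _ => h01 _ _)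
    fun _ _ _ hu hv huv => hf (hc _ _ _ hu hv huv)

end Matrix

theorem SimpleGraph.isTotallyUnimodular_incMatrix {R : Type*} [CommRing R] [IsDomain R]
    {α : Type*} [DecidableEq α] {G : SimpleGraph α} [DecidableRel G.Adj] (h : G.Colorable 2) :
    (G.incMatrix R).IsTotallyUnimodular := by
  obtain ⟨C⟩ := h
  refine Matrix.isTotallyUnimodular_of_bicolored _ (G.recolorOfEquiv finTwoEquiv C)
    (fun a e => ?_) fun e u v hu hv huv => ?_
  · rw [incMatrix_apply']
    split_ifs <;> simp
  · rw [incMatrix_apply_eq_one_iff] at hu hv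
    by_contra hne
    exact (G.recolorOfEquiv finTwoEquiv C).valid (G.adj_of_mem_incidenceSet hne hu hv) huv

lemma isTU_iff_isTotallyUnimodular {R C : Type} (A : Matrix R C ℤ) :
    IsTU A ↔ A.IsTotallyUnimodular := by
  have hrange (x : ℤ) : x ∈ Set.range SignType.cast ↔ x = 0 ∨ x = 1 ∨ x = -1 := by
    simp only [SignType.range_eq, Set.mem_insert_iff, Set.mem_singleton_iff]
    tauto
  simp only [IsTU, Matrix.IsTotallyUnimodular, hrange]

section NG

variable {n m : ℕ} {G : SimpleGraph (Fin n)}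

/-- The column `x_{ij}` of `N_G` with `{i, j} = {a, b}` and `i < j`. -/
noncomputable def edgeVar {a b : Fin n} (h : G.Adj a b) : VarSet n G :=
  if a < b then ⟨(a, b), .inr h⟩ else ⟨(b, a), .inr h.symm⟩

lemma NG_inl_of_lt (z : Fin m ≃ G.edgeSet) {a b : Fin n} (h : G.Adj a b) (hab : a < b)
    (w : Fin n) : NG n m G z (.inl w) ⟨(a, b), .inr h⟩ = if w = a ∨ w = b then 1 else 0 := by
  by_cases ha : w = a <;> by_cases hb : w = b <;>
    simp [NG, aVec, h.ne, hab, ha, hb]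

lemma NG_inl_edgeVar (z : Fin m ≃ G.edgeSet) {a b : Fin n} (h : G.Adj a b) (w : Fin n) :
    NG n m G z (.inl w) (edgeVar h) = if w = a ∨ w = b then 1 else 0 := by
  unfold edgeVar
  by_cases hab : a < b
  · rw [if_pos hab]
    exact NG_inl_of_lt z h hab w
  · rw [if_neg hab, NG_inl_of_lt z h.symm (lt_of_le_of_ne (not_lt.mp hab) h.ne') w]
    simp only [or_comm]

lemma submatrix_NG_edgeVar {ι : Type*} [DecidableEq ι] (z : Fin m ≃ G.edgeSet) {σ : Perm ι}
    {g : ι → Fin n} (hg : g.Injective) (hadj : ∀ i, G.Adj (g i) (g (σ i))) :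
    (NG n m G z).submatrix (.inl ∘ g) (fun j => edgeVar (hadj j)) = (1 + σ.permMatrix ℤ)ᵀ := by
  ext i j
  have hσ : σ j ≠ j := fun h => (hadj j).ne (by rw [h])
  simp only [submatrix_apply, Function.comp_apply, NG_inl_edgeVar, hg.eq_iff, transpose_apply,
    Matrix.add_apply, one_apply, PEquiv.toMatrix_apply, toPEquiv_apply, Option.mem_def,
    Option.some.injEq]
  rcases eq_or_ne i j with rfl | hij <;> simp [hσ.symm, *, eq_comm]

/-- The position of a column of `N_G` in `[[B, 1, 0], [-1, 0, 1]]`. -/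
noncomputable def colIndex (z : Fin m ≃ G.edgeSet) (v : VarSet n G) : Fin m ⊕ (Fin n ⊕ Fin m) :=
  if hv : v.1.1 = v.1.2 then .inr (.inl v.1.1)
  else if v.1.1 < v.1.2 then .inl (edgeIdx z (v.2.resolve_left hv))
  else .inr (.inr (edgeIdx z (v.2.resolve_left hv)))

lemma NG_eq_submatrix [DecidableRel G.Adj] (z : Fin m ≃ G.edgeSet) :
    NG n m G z = (Matrix.fromCols (Matrix.fromRows
      ((G.incMatrix ℤ).submatrix id fun t => (z t : Sym2 (Fin n))) (-1)) 1).submatrix id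
      (colIndex z) := by
  ext s ⟨⟨a, b⟩, hv⟩
  by_cases hab : G.Adj a b
  swap
  · obtain rfl : a = b := hv.resolve_right hab
    rcases s with w | t <;> simp [NG, aVec, colIndex, one_apply, Pi.single_apply]
  · have hz : (z (edgeIdx z hab) : Sym2 (Fin n)) = s(a, b) := by simp [edgeIdx]
    rcases s with w | t <;> by_cases hlt : a < b <;>
      simp [NG, aVec, colIndex, hab.ne, hlt, hz, one_apply, Pi.single_apply,
        SimpleGraph.incMatrix_apply', SimpleGraph.mk'_mem_incidenceSet_iff, hab]
    by_cases hw : w = a <;> simp [hw, hab.ne]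

end NG

/-- The matrix `N_G` is totally unimodular if and only if `G` is bipartite. -/
theorem NG_totallyUnimodular_iff_bipartite (n m : ℕ) (G : SimpleGraph (Fin n))
    (z : Fin m ≃ G.edgeSet) :
    IsTU (NG n m G z) ↔ G.Colorable 2 := by
  classical
  rw [isTU_iff_isTotallyUnimodular]
  refine ⟨fun hTU => ?_, fun hG => ?_⟩
  · by_contra hG
    obtain ⟨k, g, hk, hg, hadj⟩ := SimpleGraph.exists_odd_cycle hG
    have : Nonempty (Fin k) := ⟨⟨0, hk.pos⟩⟩
    have hdet := (isTotallyUnimodular_iff _).mp hTU k (.inl ∘ g) fun j => edgeVar (hadj j)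
    rw [submatrix_NG_edgeVar z hg hadj, det_transpose] at hdet
    exact det_one_add_permMatrix_notMem_range_signType hk (finRotate_pow_self k) hdet
  · have hB := (G.isTotallyUnimodular_incMatrix (R := ℤ) hG).submatrix id
      fun t => (z t : Sym2 (Fin n))
    have hunit : Nonempty (Fin m) → ∀ t : Fin m, ∃ t' : Fin m, ∃ s : SignType,
        (-1 : Matrix (Fin m) (Fin m) ℤ) t = Pi.single t' (s : ℤ) := fun _ t =>
      ⟨t, -1, by ext; simp [one_apply, Pi.single_apply, eq_comm, apply_ite]⟩
    rw [NG_eq_submatrix]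
    exact ((hB.fromRows_unitlike hunit).fromCols_one).submatrix _ _
end
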